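/- arXiv:2412.00001 — 7 statements merged into one kernel-verified Lean document; each statement's English description precedes it below -/
import Mathlib

section
/- The group G acts doubly transitively on the 8 points {1,...,8}; that is, for any two ordered pairs of distinct points (a,b) and (c,d) there exists g ∈ G with g(a) = c and g(b) = d. -/
set_option maxRecDepth 20000


open Equiv

/-- Generators of `G` (points `1,…,8` of the paper are `0,…,7` here). -/
def Ggens : Set (Equiv.Perm (Fin 8)) :=
  {c[4, 6] * c[5, 7],
   c[1, 2, 4] * c[3, 6, 5],
   c[0, 1] * c[2, 3] * c[4, 5] * c[6, 7],
   c[0, 4] * c[1, 5] * c[2, 6] * c[3, 7]}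

def G : Subgroup (Equiv.Perm (Fin 8)) := Subgroup.closure Ggens

private def w0 : Equiv.Perm (Fin 8) := c[4, 6] * c[5, 7]
private def w1 : Equiv.Perm (Fin 8) := c[1, 2, 4] * c[3, 6, 5]
private def w2 : Equiv.Perm (Fin 8) := c[0, 1] * c[2, 3] * c[4, 5] * c[6, 7]
private def w3 : Equiv.Perm (Fin 8) := c[0, 4] * c[1, 5] * c[2, 6] * c[3, 7]

private lemma hw0 : w0 ∈ G := Subgroup.subset_closure (by simp [Ggens, w0])
private lemma hw1 : w1 ∈ G := Subgroup.subset_closure (by simp [Ggens, w1])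
private lemma hw2 : w2 ∈ G := Subgroup.subset_closure (by simp [Ggens, w2])
private lemma hw3 : w3 ∈ G := Subgroup.subset_closure (by simp [Ggens, w3])

private lemma key : ∀ c d : Fin 8, c ≠ d → ∃ g ∈ G, g 0 = c ∧ g 1 = d := by
  intro c d hcd
  fin_cases c <;> fin_cases d
  · exact absurd rfl hcd
  · exact ⟨1, one_mem G, rfl, rfl⟩
  · exact ⟨w1, hw1, by decide, by decide⟩
  · exact ⟨w1 * w1 * w0 * w1 * w1, (mul_mem (mul_mem (mul_mem (mul_mem hw1 hw1) hw0) hw1) hw1), by decide, by decide⟩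
  · exact ⟨w1 * w1, (mul_mem hw1 hw1), by decide, by decide⟩
  · exact ⟨w1 * w0 * w1 * w1, (mul_mem (mul_mem (mul_mem hw1 hw0) hw1) hw1), by decide, by decide⟩
  · exact ⟨w0 * w1 * w1, (mul_mem (mul_mem hw0 hw1) hw1), by decide, by decide⟩
  · exact ⟨w0 * w1 * w0 * w1 * w1, (mul_mem (mul_mem (mul_mem (mul_mem hw0 hw1) hw0) hw1) hw1), by decide, by decide⟩
  · exact ⟨w2, hw2, by decide, by decide⟩
  · exact absurd rfl hcd
  · exact ⟨w1 * w1 * w0 * w1 * w1 * w3, (mul_mem (mul_mem (mul_mem (mul_mem (mul_mem hw1 hw1) hw0) hw1) hw1) hw3), by decide, by decide⟩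
  · exact ⟨w1 * w3, (mul_mem hw1 hw3), by decide, by decide⟩
  · exact ⟨w1 * w3 * w0 * w1 * w1, (mul_mem (mul_mem (mul_mem (mul_mem hw1 hw3) hw0) hw1) hw1), by decide, by decide⟩
  · exact ⟨w1 * w3 * w1, (mul_mem (mul_mem hw1 hw3) hw1), by decide, by decide⟩
  · exact ⟨w0 * w1 * w3 * w0 * w1 * w1, (mul_mem (mul_mem (mul_mem (mul_mem (mul_mem hw0 hw1) hw3) hw0) hw1) hw1), by decide, by decide⟩
  · exact ⟨w0 * w1 * w3 * w1, (mul_mem (mul_mem (mul_mem hw0 hw1) hw3) hw1), by decide, by decide⟩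
  · exact ⟨w1 * w2, (mul_mem hw1 hw2), by decide, by decide⟩
  · exact ⟨w1 * w1 * w3 * w0 * w1 * w1, (mul_mem (mul_mem (mul_mem (mul_mem (mul_mem hw1 hw1) hw3) hw0) hw1) hw1), by decide, by decide⟩
  · exact absurd rfl hcd
  · exact ⟨w3 * w0 * w3, (mul_mem (mul_mem hw3 hw0) hw3), by decide, by decide⟩
  · exact ⟨w0 * w1 * w1 * w3, (mul_mem (mul_mem (mul_mem hw0 hw1) hw1) hw3), by decide, by decide⟩
  · exact ⟨w0 * w1 * w0 * w1 * w3 * w1, (mul_mem (mul_mem (mul_mem (mul_mem (mul_mem hw0 hw1) hw0) hw1) hw3) hw1), by decide, by decide⟩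
  · exact ⟨w1 * w1 * w3, (mul_mem (mul_mem hw1 hw1) hw3), by decide, by decide⟩
  · exact ⟨w1 * w0 * w1 * w3 * w1, (mul_mem (mul_mem (mul_mem (mul_mem hw1 hw0) hw1) hw3) hw1), by decide, by decide⟩
  · exact ⟨w1 * w1 * w0 * w1 * w1 * w2, (mul_mem (mul_mem (mul_mem (mul_mem (mul_mem hw1 hw1) hw0) hw1) hw1) hw2), by decide, by decide⟩
  · exact ⟨w1 * w2 * w3, (mul_mem (mul_mem hw1 hw2) hw3), by decide, by decide⟩
  · exact ⟨w2 * w3 * w0 * w3, (mul_mem (mul_mem (mul_mem hw2 hw3) hw0) hw3), by decide, by decide⟩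
  · exact absurd rfl hcd
  · exact ⟨w0 * w1 * w2 * w3 * w0 * w1 * w1, (mul_mem (mul_mem (mul_mem (mul_mem (mul_mem (mul_mem hw0 hw1) hw2) hw3) hw0) hw1) hw1), by decide, by decide⟩
  · exact ⟨w0 * w1 * w1 * w0 * w3, (mul_mem (mul_mem (mul_mem (mul_mem hw0 hw1) hw1) hw0) hw3), by decide, by decide⟩
  · exact ⟨w1 * w2 * w3 * w0 * w1 * w1, (mul_mem (mul_mem (mul_mem (mul_mem (mul_mem hw1 hw2) hw3) hw0) hw1) hw1), by decide, by decide⟩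
  · exact ⟨w1 * w1 * w0 * w3, (mul_mem (mul_mem (mul_mem hw1 hw1) hw0) hw3), by decide, by decide⟩
  · exact ⟨w1 * w1 * w2, (mul_mem (mul_mem hw1 hw1) hw2), by decide, by decide⟩
  · exact ⟨w1 * w0 * w1 * w1 * w3, (mul_mem (mul_mem (mul_mem (mul_mem hw1 hw0) hw1) hw1) hw3), by decide, by decide⟩
  · exact ⟨w3 * w0 * w1 * w1, (mul_mem (mul_mem (mul_mem hw3 hw0) hw1) hw1), by decide, by decide⟩
  · exact ⟨w3 * w0 * w1 * w0 * w1 * w1, (mul_mem (mul_mem (mul_mem (mul_mem (mul_mem hw3 hw0) hw1) hw0) hw1) hw1), by decide, by decide⟩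
  · exact absurd rfl hcd
  · exact ⟨w3, hw3, by decide, by decide⟩
  · exact ⟨w3 * w1, (mul_mem hw3 hw1), by decide, by decide⟩
  · exact ⟨w1 * w1 * w0 * w1 * w3 * w1, (mul_mem (mul_mem (mul_mem (mul_mem (mul_mem hw1 hw1) hw0) hw1) hw3) hw1), by decide, by decide⟩
  · exact ⟨w1 * w0 * w1 * w1 * w2, (mul_mem (mul_mem (mul_mem (mul_mem hw1 hw0) hw1) hw1) hw2), by decide, by decide⟩
  · exact ⟨w1 * w0 * w3 * w1, (mul_mem (mul_mem (mul_mem hw1 hw0) hw3) hw1), by decide, by decide⟩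
  · exact ⟨w0 * w1 * w0 * w1 * w0 * w3 * w1, (mul_mem (mul_mem (mul_mem (mul_mem (mul_mem (mul_mem hw0 hw1) hw0) hw1) hw0) hw3) hw1), by decide, by decide⟩
  · exact ⟨w2 * w3 * w0 * w1 * w1, (mul_mem (mul_mem (mul_mem (mul_mem hw2 hw3) hw0) hw1) hw1), by decide, by decide⟩
  · exact ⟨w2 * w3, (mul_mem hw2 hw3), by decide, by decide⟩
  · exact absurd rfl hcd
  · exact ⟨w1 * w1 * w0 * w1 * w1 * w0 * w3, (mul_mem (mul_mem (mul_mem (mul_mem (mul_mem (mul_mem hw1 hw1) hw0) hw1) hw1) hw0) hw3), by decide, by decide⟩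
  · exact ⟨w1 * w0 * w3, (mul_mem (mul_mem hw1 hw0) hw3), by decide, by decide⟩
  · exact ⟨w0 * w1 * w1 * w2, (mul_mem (mul_mem (mul_mem hw0 hw1) hw1) hw2), by decide, by decide⟩
  · exact ⟨w0 * w1 * w0 * w1 * w1 * w3, (mul_mem (mul_mem (mul_mem (mul_mem (mul_mem hw0 hw1) hw0) hw1) hw1) hw3), by decide, by decide⟩
  · exact ⟨w1 * w1 * w2 * w3, (mul_mem (mul_mem (mul_mem hw1 hw1) hw2) hw3), by decide, by decide⟩
  · exact ⟨w1 * w0 * w1 * w1 * w0 * w3, (mul_mem (mul_mem (mul_mem (mul_mem (mul_mem hw1 hw0) hw1) hw1) hw0) hw3), by decide, by decide⟩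
  · exact ⟨w0 * w3 * w1, (mul_mem (mul_mem hw0 hw3) hw1), by decide, by decide⟩
  · exact ⟨w0 * w1 * w1 * w0 * w1 * w3 * w1, (mul_mem (mul_mem (mul_mem (mul_mem (mul_mem (mul_mem hw0 hw1) hw1) hw0) hw1) hw3) hw1), by decide, by decide⟩
  · exact absurd rfl hcd
  · exact ⟨w0 * w3, (mul_mem hw0 hw3), by decide, by decide⟩
  · exact ⟨w0 * w1 * w0 * w1 * w1 * w2, (mul_mem (mul_mem (mul_mem (mul_mem (mul_mem hw0 hw1) hw0) hw1) hw1) hw2), by decide, by decide⟩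
  · exact ⟨w0 * w1 * w0 * w3 * w1, (mul_mem (mul_mem (mul_mem (mul_mem hw0 hw1) hw0) hw3) hw1), by decide, by decide⟩
  · exact ⟨w1 * w0 * w1 * w0 * w3 * w1, (mul_mem (mul_mem (mul_mem (mul_mem (mul_mem hw1 hw0) hw1) hw0) hw3) hw1), by decide, by decide⟩
  · exact ⟨w1 * w0 * w1 * w0 * w3, (mul_mem (mul_mem (mul_mem (mul_mem hw1 hw0) hw1) hw0) hw3), by decide, by decide⟩
  · exact ⟨w1 * w1 * w0 * w1 * w0 * w3 * w1, (mul_mem (mul_mem (mul_mem (mul_mem (mul_mem (mul_mem hw1 hw1) hw0) hw1) hw0) hw3) hw1), by decide, by decide⟩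
  · exact ⟨w0 * w1 * w0 * w3, (mul_mem (mul_mem (mul_mem hw0 hw1) hw0) hw3), by decide, by decide⟩
  · exact ⟨w0 * w2 * w3, (mul_mem (mul_mem hw0 hw2) hw3), by decide, by decide⟩
  · exact absurd rfl hcd

theorem G_doubly_transitive :
    ∀ a b c d : Fin 8, a ≠ b → c ≠ d →
      ∃ g ∈ G, g a = c ∧ g b = d := by
  intro a b c d hab hcd
  obtain ⟨g1, hg1, hg1a, hg1b⟩ := key a b hab
  obtain ⟨g2, hg2, hg2c, hg2d⟩ := key c d hcd
  refine ⟨g2 * g1⁻¹, mul_mem hg2 (inv_mem hg1), ?_, ?_⟩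
  · simp [Equiv.Perm.mul_apply, ← hg1a, ← hg2c]
  · simp [Equiv.Perm.mul_apply, ← hg1b, ← hg2d]
end

section
/- The group H does not act doubly transitively on the 14 points {1,...,14}. -/
set_option maxRecDepth 4000

open Equiv

/-- Generators of `H` (points `1,…,14` of the paper are `0,…,13` here). -/
def Hgens : Set (Equiv.Perm (Fin 14)) :=
  {c[0, 1, 2, 3, 4, 5, 6] * c[13, 12, 11, 10, 9, 8, 7],
   c[0, 3, 6, 8, 13, 10, 7, 5] * c[1, 4, 12, 9]}

def H : Subgroup (Equiv.Perm (Fin 14)) := Subgroup.closure Hgens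

/-- The fixed-point-free involution `x ↦ 13 - x` that `H` centralizes. -/
def rev : Equiv.Perm (Fin 14) :=
  c[0, 13] * c[1, 12] * c[2, 11] * c[3, 10] * c[4, 9] * c[5, 8] * c[6, 7]

lemma H_le_centralizer : H ≤ Subgroup.centralizer {rev} := by
  rw [H, Subgroup.closure_le]
  intro g hg
  rw [SetLike.mem_coe, Subgroup.mem_centralizer_singleton_iff]
  rcases hg with rfl | rfl <;> decide

theorem H_not_doubly_transitive :
    ¬ (∀ a b c d : Fin 14, a ≠ b → c ≠ d →
        ∃ h ∈ H, h a = c ∧ h b = d) := by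
  intro hyp
  obtain ⟨h, hH, h0, h13⟩ := hyp 0 13 0 1 (by decide) (by decide)
  have hc := H_le_centralizer hH
  rw [Subgroup.mem_centralizer_singleton_iff] at hc
  have : (rev * h) 0 = (h * rev) 0 := by rw [hc]
  simp only [Equiv.Perm.mul_apply] at this
  rw [h0, show rev 0 = 13 by decide] at this
  rw [h13] at this
  exact absurd this (by decide)
end

section
/- For every element g of G, the number of fixed points of g on {1,...,8} belongs to the set {0, 1, 2, 4, 8}. -/
/-!
Reading the points as vectors of `𝔽₂³` through their binary digits, every generator of `G`
preserves the affine combination `x - y + z`, hence so does every element of `G`. The fixed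
points of such a permutation are closed under `x - y + z`, so if there is one, `a`, then
translating by `-a` turns them into a subgroup; by Lagrange their number divides `8`.
-/

open Equiv

open Finset

section AffinePerms

/-- Over `ZMod 2` these are exactly the affine bijections. -/
def affinePerms (V : Type*) [AddGroup V] : Subgroup (Perm V) where
  carrier := {g | ∀ x y z, g (x - y + z) = g x - g y + g z}
  mul_mem' {g h} hg hh x y z := by
    simp only [Perm.mul_apply, hh x y z, hg (h x) (h y) (h z)]
  one_mem' _ _ _ := rfl
  inv_mem' {g} hg x y z := by
    have := hg (g.symm x) (g.symm y) (g.symm z)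
    simp only [Perm.coe_inv, g.apply_symm_apply] at this ⊢
    rw [g.symm_apply_eq, this]

variable {V : Type*} [AddGroup V]

theorem mem_affinePerms {g : Perm V} :
    g ∈ affinePerms V ↔ ∀ x y z, g (x - y + z) = g x - g y + g z :=
  Iff.rfl

theorem card_dvd_card_of_sub_add_mem [Fintype V] {S : Finset V} {a : V} (ha : a ∈ S)
    (hS : ∀ x ∈ S, ∀ y ∈ S, ∀ z ∈ S, x - y + z ∈ S) : #S ∣ Fintype.card V := by
  -- `S` is the coset `H + a`.
  let H : AddSubgroup V :=
    { carrier := {v | v + a ∈ S}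
      add_mem' := fun {u v} hu hv => by simpa [add_assoc] using hS _ hu _ ha _ hv
      zero_mem' := by simpa using ha
      neg_mem' := fun {u} hu => by simpa [add_assoc] using hS _ ha _ hu _ ha }
  have hcard : Nat.card H = #S := calc
    Nat.card H = Nat.card S :=
      Nat.card_congr ((Equiv.addRight a).subtypeEquiv fun _ => Iff.rfl)
    _ = #S := Nat.card_eq_fintype_card.trans (Fintype.card_coe S)
  rw [← hcard, ← Nat.card_eq_fintype_card]
  exact H.card_addSubgroup_dvd_card

theorem card_fixedPoints_eq_zero_or_dvd [Fintype V] [DecidableEq V] {g : Perm V}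
    (hg : g ∈ affinePerms V) : #{v | g v = v} = 0 ∨ #{v | g v = v} ∣ Fintype.card V := by
  rcases eq_empty_or_nonempty {v | g v = v} with h | ⟨a, ha⟩
  · exact .inl (by rw [h, card_empty])
  refine .inr (card_dvd_card_of_sub_add_mem ha ?_)
  simp only [mem_filter, mem_univ, true_and]
  intro x hx y hy z hz
  rw [hg, hx, hy, hz]

end AffinePerms

theorem card_fixedPoints_permCongr {α β : Type*} [Fintype α] [Fintype β] [DecidableEq α]
    [DecidableEq β] (e : α ≃ β) (g : Perm α) :
    #{y | e.permCongr g y = y} = #{x | g x = x} := by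
  refine card_equiv e.symm fun y => ?_
  simp [permCongr_apply, ← e.eq_symm_apply]

def binaryDigits : Fin 8 ≃ (Fin 3 → ZMod 2) := (finFunctionFinEquiv (m := 2) (n := 3)).symm

theorem binaryDigits_permCongr_mem_affinePerms {g : Perm (Fin 8)} (hg : g ∈ G) :
    binaryDigits.permCongr g ∈ affinePerms _ := by
  refine (Subgroup.closure_le
    ((affinePerms _).comap binaryDigits.permCongrHom.toMonoidHom)).2 ?_ hg
  rintro g (rfl | rfl | rfl | rfl) <;>
    simp only [SetLike.mem_coe, Subgroup.mem_comap, mem_affinePerms] <;> decide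

theorem G_fixedPoints :
    ∀ g ∈ G, (Finset.univ.filter fun x : Fin 8 => g x = x).card ∈
      ({0, 1, 2, 4, 8} : Set ℕ) := by
  intro g hg
  have h := card_fixedPoints_eq_zero_or_dvd (binaryDigits_permCongr_mem_affinePerms hg)
  rw [card_fixedPoints_permCongr, Fintype.card_fun, ZMod.card, Fintype.card_fin] at h
  rcases h with h | h
  · simp [h]
  · obtain ⟨i, hi, hcard⟩ := (Nat.dvd_prime_pow Nat.prime_two).1 h
    interval_cases i <;> simp [hcard]
end

section
/- For every element h of H, the number of fixed points of h on {1,...,14} belongs to the set {0, 2, 6, 14}. -/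
/-!
Label the points by the fourteen imaginary unit octonions `±e_u`, `u ∈ (ZMod 2)³ \ {0}`. Then
every element of `H` extends, by fixing `±1`, to an automorphism `φ` of the loop of the sixteen
unit octonions (`H` is the nonsplit extension `2³·GL(3,2)`). The fixed set of `φ` is closed under
the product and contains `-1`, so it is the full preimage of a subgroup `W` of `(ZMod 2)³`: it has
`2 |W|` elements with `|W| ∣ 8`, hence `h` has `2 |W| - 2 ∈ {0, 2, 6, 14}` fixed points.
-/

open Equiv

open Finset Function

theorem Equiv.Perm.card_fixed_extendDomain_add_card {α β : Type*} [Fintype α] [DecidableEq α]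
    [Fintype β] [DecidableEq β] {p : β → Prop} [DecidablePred p] (g : Perm α)
    (f : α ≃ Subtype p) :
    #{b | g.extendDomain f b = b} + Fintype.card α = #{a | g a = a} + Fintype.card β := by
  have hα := card_filter_add_card_filter_not (s := univ) fun a => g a = a
  have hβ := card_filter_add_card_filter_not (s := univ) fun b => g.extendDomain f b = b
  have hsupp := g.card_support_extend_domain f
  simp only [Perm.support, ne_eq] at hsupp
  rw [card_univ] at hα hβ
  omega

theorem MulAut.mem_range_toPerm_of_map_mul {M : Type*} [Mul M] (σ : Perm M)
    (hσ : ∀ x y, σ (x * y) = σ x * σ y) : σ ∈ (MulAut.toPerm (M := M)).range :=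
  ⟨MulEquiv.mk' σ hσ, rfl⟩

@[ext]
structure TwistedProd {V : Type*} (θ : V → V → ZMod 2) where
  base : V
  sign : ZMod 2

namespace TwistedProd

variable {V : Type*} (θ : V → V → ZMod 2)

def equivProd : TwistedProd θ ≃ V × ZMod 2 where
  toFun p := (p.base, p.sign)
  invFun p := ⟨p.1, p.2⟩

instance [Fintype V] : Fintype (TwistedProd θ) := Fintype.ofEquiv _ (equivProd θ).symm

instance [DecidableEq V] : DecidableEq (TwistedProd θ) := (equivProd θ).decidableEq

variable [AddCommGroup V]

instance : Mul (TwistedProd θ) :=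
  ⟨fun p q => ⟨p.base + q.base, p.sign + q.sign + θ p.base q.base⟩⟩

variable {θ}

@[simp] theorem base_mul (p q : TwistedProd θ) : (p * q).base = p.base + q.base := rfl

@[simp] theorem sign_mul (p q : TwistedProd θ) :
    (p * q).sign = p.sign + q.sign + θ p.base q.base := rfl

variable [Module (ZMod 2) V] (hθ : ∀ u, θ u 0 = 0) (φ : MulAut (TwistedProd θ))
  (hφ : φ ⟨0, 1⟩ = ⟨0, 1⟩)

def fixedBase : AddSubgroup V where
  carrier := {u | ∃ s, φ ⟨u, s⟩ = ⟨u, s⟩}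
  add_mem' := by
    rintro u v ⟨s, hs⟩ ⟨t, ht⟩
    exact ⟨_, (map_mul φ ⟨u, s⟩ ⟨v, t⟩).trans (by rw [hs, ht]; rfl)⟩
  zero_mem' := ⟨1, hφ⟩
  neg_mem' := by
    intro u hu
    rwa [Set.mem_ofPred_eq, ZModModule.neg_eq_self]

include hθ in
theorem apply_eq_self_iff_mem_fixedBase (p : TwistedProd θ) :
    φ p = p ↔ p.base ∈ fixedBase φ hφ := by
  refine ⟨fun h => ⟨p.sign, h⟩, fun ⟨s, hs⟩ => ?_⟩
  obtain rfl | rfl : s = p.sign ∨ s = p.sign + 1 := by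
    have key : ∀ a b : ZMod 2, b = a ∨ b = a + 1 := by decide
    exact key _ _
  · exact hs
  · have hp : p = ⟨p.base, p.sign + 1⟩ * ⟨0, 1⟩ := by
      ext <;> simp [hθ, add_assoc, ZModModule.add_self]
    rw [hp, map_mul, hs, hφ]

include hθ in
theorem card_fixed_eq_two_mul [Fintype V] [DecidableEq V] :
    #{p | φ p = p} = 2 * Nat.card (fixedBase φ hφ) := by
  let e : {p // φ p = p} ≃ fixedBase φ hφ × ZMod 2 :=
    (subtypeEquivRight (apply_eq_self_iff_mem_fixedBase hθ φ hφ)).trans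
      (((equivProd θ).subtypeEquiv fun _ => Iff.rfl).trans prodSubtypeFstEquivSubtypeProd)
  rw [← Fintype.card_subtype, ← Nat.card_eq_fintype_card, Nat.card_congr e, Nat.card_prod,
    Nat.card_zmod, mul_comm]

end TwistedProd

/-- The cocycle of the octonions as a twisted group algebra of `(ZMod 2)³` (Albuquerque–Majid):
`e_u * e_v = (-1) ^ octonionCocycle u v • e_(u + v)`. -/
def octonionCocycle (x y : Fin 3 → ZMod 2) : ZMod 2 :=
  x 0 * y 0 + x 0 * y 1 + x 0 * y 2 + x 1 * y 1 + x 1 * y 2 + x 2 * y 2 +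
    y 0 * x 1 * x 2 + x 0 * y 1 * x 2 + x 0 * x 1 * y 2

theorem octonionCocycle_zero_right (u : Fin 3 → ZMod 2) : octonionCocycle u 0 = 0 := by
  simp [octonionCocycle]

abbrev OctonionLoop := TwistedProd octonionCocycle

/-- Found by computer search; points `x` and `13 - x` are opposite units. -/
def unitOctonion : Fin 14 → OctonionLoop :=
  ![⟨![1, 0, 0], 0⟩, ⟨![1, 1, 0], 0⟩, ⟨![1, 0, 1], 0⟩, ⟨![0, 1, 0], 0⟩, ⟨![0, 1, 1], 0⟩,
    ⟨![1, 1, 1], 0⟩, ⟨![0, 0, 1], 0⟩, ⟨![0, 0, 1], 1⟩, ⟨![1, 1, 1], 1⟩, ⟨![0, 1, 1], 1⟩,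
    ⟨![0, 1, 0], 1⟩, ⟨![1, 0, 1], 1⟩, ⟨![1, 1, 0], 1⟩, ⟨![1, 0, 0], 1⟩]

theorem unitOctonion_injective : Injective unitOctonion := by decide

theorem mem_range_unitOctonion_iff (p : OctonionLoop) :
    p ∈ Set.range unitOctonion ↔ p.base ≠ 0 := by
  revert p
  simp only [Set.mem_range]
  decide

def unitEquiv : Fin 14 ≃ {p : OctonionLoop // p.base ≠ 0} where
  toFun x := ⟨unitOctonion x, (mem_range_unitOctonion_iff _).1 ⟨x, rfl⟩⟩
  invFun p := unitOctonion_injective.invOfMemRange ⟨p, (mem_range_unitOctonion_iff _).2 p.2⟩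
  left_inv := unitOctonion_injective.right_inv_of_invOfMemRange
  right_inv _ := Subtype.ext (unitOctonion_injective.left_inv_of_invOfMemRange _)

theorem exists_mulAut_of_mem_H {h : Perm (Fin 14)} (hh : h ∈ H) :
    ∃ φ : MulAut OctonionLoop, ∀ p, φ p = h.extendDomain unitEquiv p := by
  suffices H ≤ (MulAut.toPerm (M := OctonionLoop)).range.comap (Perm.extendDomainHom unitEquiv) by
    obtain ⟨φ, hφ⟩ := this hh
    exact ⟨φ, fun p => congrArg (· p) hφ⟩
  refine (Subgroup.closure_le _).2 ?_
  rintro g (rfl | rfl) <;> exact MulAut.mem_range_toPerm_of_map_mul _ (by decide +kernel)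

theorem H_fixedPoints :
    ∀ h ∈ H, (Finset.univ.filter fun x : Fin 14 => h x = x).card ∈
      ({0, 2, 6, 14} : Set ℕ) := by
  intro h hh
  obtain ⟨φ, hφ⟩ := exists_mulAut_of_mem_H hh
  have hcenter : φ ⟨0, 1⟩ = ⟨0, 1⟩ := by
    rw [hφ]
    exact Perm.extendDomain_apply_not_subtype _ _ (by simp)
  have hcount := h.card_fixed_extendDomain_add_card unitEquiv
  simp only [← hφ, TwistedProd.card_fixed_eq_two_mul octonionCocycle_zero_right φ hcenter,
    Fintype.card_fin, show Fintype.card OctonionLoop = 16 from rfl] at hcount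
  have hW : Nat.card (TwistedProd.fixedBase φ hcenter) ∈ ({1, 2, 4, 8} : Finset ℕ) := by
    rw [show ({1, 2, 4, 8} : Finset ℕ) = Nat.divisors 8 by decide]
    simpa using AddSubgroup.card_addSubgroup_dvd_card (TwistedProd.fixedBase φ hcenter)
  simp only [Finset.mem_insert, Finset.mem_singleton] at hW
  simp only [Set.mem_insert_iff, Set.mem_singleton_iff]
  omega
end

section
/- Define a_k = 2^k(7^k/1344 + 7·3^k/192 + 37/96), b_k = 2^k(7^k/448 − 3^k/64 + 1/32), d_k = 2^k(7^k/224 + 3·3^k/32 + 3/16), e_k = 2^k(7^k/192 + 3^k/192 − 5/96), f_k = 2^k(7^k/168 + 3^k/24 − 1/6), g_k = 2^k(7^k/192 + 17·3^k/192 + 19/96), h_k = 2^k(7^k/192 − 7·3^k/192 + 7/96), i_k = 2^k(7^k/96 + 5·3^k/96 − 11/48), j_k = 2^k(7^k/64 + 3^k/64 − 5/32), l_k = 2^k(7^k/64 − 7·3^k/64 + 7/32). Then for all k ≥ 1, a_k² + 2b_k² + d_k² + e_k² + f_k² + g_k² + h_k² + i_k² + j_k² + l_k² = 2^{2k}(7^{2k}/1344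 + 7·3^{2k}/192 + 37/96). -/
theorem H_dim_sum_of_squares (k : ℕ) (hk : 1 ≤ k)
    (a b d e f g h i j l : ℚ)
    (ha : a = 2 ^ k * (7 ^ k / 1344 + 7 * 3 ^ k / 192 + 37 / 96))
    (hb : b = 2 ^ k * (7 ^ k / 448 - 3 ^ k / 64 + 1 / 32))
    (hd : d = 2 ^ k * (7 ^ k / 224 + 3 * 3 ^ k / 32 + 3 / 16))
    (he : e = 2 ^ k * (7 ^ k / 192 + 3 ^ k / 192 - 5 / 96))
    (hf : f = 2 ^ k * (7 ^ k / 168 + 3 ^ k / 24 - 1 / 6))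
    (hg : g = 2 ^ k * (7 ^ k / 192 + 17 * 3 ^ k / 192 + 19 / 96))
    (hh : h = 2 ^ k * (7 ^ k / 192 - 7 * 3 ^ k / 192 + 7 / 96))
    (hi : i = 2 ^ k * (7 ^ k / 96 + 5 * 3 ^ k / 96 - 11 / 48))
    (hj : j = 2 ^ k * (7 ^ k / 64 + 3 ^ k / 64 - 5 / 32))
    (hl : l = 2 ^ k * (7 ^ k / 64 - 7 * 3 ^ k / 64 + 7 / 32)) :
    a ^ 2 + 2 * b ^ 2 + d ^ 2 + e ^ 2 + f ^ 2 + g ^ 2 + h ^ 2 + i ^ 2 + j ^ 2 + l ^ 2 =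
      2 ^ (2 * k) * (7 ^ (2 * k) / 1344 + 7 * 3 ^ (2 * k) / 192 + 37 / 96) := by
  subst ha hb hd he hf hg hh hi hj hl
  rw [mul_comm 2 k, pow_mul, pow_mul, pow_mul]
  ring
end

section
/- For all natural numbers k ≥ 1, the quantities a_k = 2^{3k}/1344 + 2^{2k}/32 + 7·2^k/24 + 2/7, b_k = 2^{3k}/448 − 2^{2k}/32 + 2^k/8 − 1/7, d_k = 2^{3k}/224 + 2^{2k}/16 − 2/7, e_k = 2^{3k}/192 − 2^{2k}/32 + 2^k/24, f_k = 2^{3k}/168 − 2^k/6 + 2/7, h_k = 2^{3k}/192 + 3·2^{2k}/32 + 7·2^k/24, i_k = 2^{3k}/96 + 2^{2k}/16 − 2^k/6, j_k = 2^{3k}/64 − 3·2^{2k}/32 + 2^k/8, l_k = 2^{3k}/64 + 2^{2k}/32 − 2^k/8 are all nonnegative integers. -/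
lemma pow12 : (2:ZMod 4032)^12 = 2^6 := by decide

lemma period (k : ℕ) (h : 6 ≤ k) : (2:ZMod 4032)^(k+6) = 2^k := by
  obtain ⟨m, rfl⟩ := Nat.exists_eq_add_of_le h
  have : 6 + m + 6 = m + 12 := by omega
  rw [this, pow_add, pow12, ← pow_add]
  ring_nf

lemma mem_pow : ∀ k, 1 ≤ k → (2:ZMod 4032)^k ∈
    ([2,4,8,16,32,64,128,256,512,1024,2048] : List (ZMod 4032)) := by
  intro k
  induction k using Nat.strong_induction_on with
  | _ k ih =>
    intro hk
    by_cases h : k < 12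
    · interval_cases k <;> decide
    · push_neg at h
      have h6 : 6 ≤ k - 6 := by omega
      have hke : k - 6 + 6 = k := by omega
      rw [← hke, period _ h6]
      exact ih (k-6) (by omega) (by omega)

lemma divs (x : ZMod 4032) (hx : x ∈ ([2,4,8,16,32,64,128,256,512,1024,2048] : List (ZMod 4032))) :
    3*x^3+126*x^2+1176*x+1152 = 0 ∧
    9*x^3-126*x^2+504*x-576 = 0 ∧
    18*x^3+252*x^2-1152 = 0 ∧
    21*x^3-126*x^2+168*x = 0 ∧
    24*x^3-672*x+1152 = 0 ∧
    21*x^3+378*x^2+1176*x = 0 ∧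
    42*x^3+252*x^2-672*x = 0 ∧
    63*x^3-378*x^2+504*x = 0 ∧
    63*x^3+126*x^2-504*x = 0 := by
  fin_cases hx <;> decide

lemma nat_of (q : ℚ) (h0 : 0 ≤ q) (N : ℤ) (hd : (4032:ℤ) ∣ N) (hq : q = (N:ℚ)/4032) :
    ∃ n : ℕ, q = n := by
  obtain ⟨m, rfl⟩ := hd
  have hqm : q = (m:ℚ) := by rw [hq]; push_cast; ring
  have hm0 : 0 ≤ m := by exact_mod_cast hqm ▸ h0
  exact ⟨m.toNat, by rw [hqm]; exact_mod_cast (Int.toNat_of_nonneg hm0).symm⟩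

theorem G_multiplicities_integral (k : ℕ) (hk : 1 ≤ k) :
    (∃ n : ℕ, (2 ^ (3 * k) / 1344 + 2 ^ (2 * k) / 32 + 7 * 2 ^ k / 24 + 2 / 7 : ℚ) = n) ∧
    (∃ n : ℕ, (2 ^ (3 * k) / 448 - 2 ^ (2 * k) / 32 + 2 ^ k / 8 - 1 / 7 : ℚ) = n) ∧
    (∃ n : ℕ, (2 ^ (3 * k) / 224 + 2 ^ (2 * k) / 16 - 2 / 7 : ℚ) = n) ∧
    (∃ n : ℕ, (2 ^ (3 * k) / 192 - 2 ^ (2 * k) / 32 + 2 ^ k / 24 : ℚ) = n) ∧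
    (∃ n : ℕ, (2 ^ (3 * k) / 168 - 2 ^ k / 6 + 2 / 7 : ℚ) = n) ∧
    (∃ n : ℕ, (2 ^ (3 * k) / 192 + 3 * 2 ^ (2 * k) / 32 + 7 * 2 ^ k / 24 : ℚ) = n) ∧
    (∃ n : ℕ, (2 ^ (3 * k) / 96 + 2 ^ (2 * k) / 16 - 2 ^ k / 6 : ℚ) = n) ∧
    (∃ n : ℕ, (2 ^ (3 * k) / 64 - 3 * 2 ^ (2 * k) / 32 + 2 ^ k / 8 : ℚ) = n) ∧
    (∃ n : ℕ, (2 ^ (3 * k) / 64 + 2 ^ (2 * k) / 32 - 2 ^ k / 8 : ℚ) = n) := by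
  by_cases hk1 : k = 1
  · subst hk1
    exact ⟨⟨1, by norm_num⟩, ⟨0, by norm_num⟩, ⟨0, by norm_num⟩, ⟨0, by norm_num⟩,
      ⟨0, by norm_num⟩, ⟨1, by norm_num⟩, ⟨0, by norm_num⟩, ⟨0, by norm_num⟩, ⟨0, by norm_num⟩⟩
  by_cases hk2 : k = 2
  · subst hk2
    exact ⟨⟨2, by norm_num⟩, ⟨0, by norm_num⟩, ⟨1, by norm_num⟩, ⟨0, by norm_num⟩,
      ⟨0, by norm_num⟩, ⟨3, by norm_num⟩, ⟨1, by norm_num⟩, ⟨0, by norm_num⟩, ⟨1, by norm_num⟩⟩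
  have hk3 : 3 ≤ k := by omega
  obtain ⟨hA, hB, hD, hE, hF, hH, hI, hJ, hL⟩ := divs _ (mem_pow k hk)
  have hy : (8:ℚ) ≤ 2 ^ k := by
    calc (8:ℚ) = 2 ^ 3 := by norm_num
    _ ≤ 2 ^ k := by exact pow_le_pow_right₀ (by norm_num) hk3
  have hyp : (0:ℚ) ≤ 2 ^ k := by positivity
  have h2 : (0:ℚ) ≤ 2 ^ k - 2 := by linarith
  have h4 : (0:ℚ) ≤ 2 ^ k - 4 := by linarith
  have h8 : (0:ℚ) ≤ 2 ^ k - 8 := by linarith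
  have hdvd : ∀ a b c d : ℤ,
      a * ((2:ZMod 4032)^k)^3 + b * ((2:ZMod 4032)^k)^2 + c * (2:ZMod 4032)^k + d = 0 →
      (4032:ℤ) ∣ (a * 2^(3*k) + b * 2^(2*k) + c * 2^k + d) := by
    intro a b c d h
    have := (ZMod.intCast_zmod_eq_zero_iff_dvd (a * 2^(3*k) + b * 2^(2*k) + c * 2^k + d) 4032).mp
    apply this
    push_cast
    rw [show 3*k = k*3 by ring, show 2*k = k*2 by ring, pow_mul, pow_mul]
    linear_combination h
  have cast_eq : ∀ a b c d : ℤ, ∀ q : ℚ,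
      4032 * q = a * 2^(3*k) + b * 2^(2*k) + c * 2^k + d →
      q = ((a * 2^(3*k) + b * 2^(2*k) + c * 2^k + d : ℤ) : ℚ) / 4032 := by
    intro a b c d q h
    push_cast
    linarith
  refine ⟨?_, ?_, ?_, ?_, ?_, ?_, ?_, ?_, ?_⟩
  · refine nat_of _ (by positivity) _ (hdvd 3 126 1176 1152 (by linear_combination hA)) (cast_eq 3 126 1176 1152 _ (by push_cast; ring))
  · refine nat_of _ ?_ _ (hdvd 9 (-126) 504 (-576) (by linear_combination hB)) (cast_eq 9 (-126) 504 (-576) _ (by push_cast; ring))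
    rw [show 3*k = k*3 by ring, show 2*k = k*2 by ring, pow_mul, pow_mul]
    nlinarith [mul_nonneg (mul_nonneg h2 h4) h8]
  · refine nat_of _ ?_ _ (hdvd 18 252 0 (-1152) (by linear_combination hD)) (cast_eq 18 252 0 (-1152) _ (by push_cast; ring))
    rw [show 3*k = k*3 by ring, show 2*k = k*2 by ring, pow_mul, pow_mul]
    nlinarith [mul_nonneg (mul_nonneg h2 h4) h8, mul_nonneg hyp h2, mul_nonneg (mul_nonneg hyp hyp) h2]
  · refine nat_of _ ?_ _ (hdvd 21 (-126) 168 0 (by linear_combination hE)) (cast_eq 21 (-126) 168 0 _ (by push_cast; ring))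
    rw [show 3*k = k*3 by ring, show 2*k = k*2 by ring, pow_mul, pow_mul]
    nlinarith [mul_nonneg (mul_nonneg hyp h2) h4]
  · refine nat_of _ ?_ _ (hdvd 24 0 (-672) 1152 (by linear_combination hF)) (cast_eq 24 0 (-672) 1152 _ (by push_cast; ring))
    rw [show 3*k = k*3 by ring, pow_mul]
    nlinarith [mul_nonneg (mul_nonneg h2 h4) (by linarith : (0:ℚ) ≤ 2^k + 6)]
  · refine nat_of _ (by positivity) _ (hdvd 21 378 1176 0 (by linear_combination hH)) (cast_eq 21 378 1176 0 _ (by push_cast; ring))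
  · refine nat_of _ ?_ _ (hdvd 42 252 (-672) 0 (by linear_combination hI)) (cast_eq 42 252 (-672) 0 _ (by push_cast; ring))
    rw [show 3*k = k*3 by ring, show 2*k = k*2 by ring, pow_mul, pow_mul]
    nlinarith [mul_nonneg (mul_nonneg hyp h2) (by linarith : (0:ℚ) ≤ 2^k + 8)]
  · refine nat_of _ ?_ _ (hdvd 63 (-378) 504 0 (by linear_combination hJ)) (cast_eq 63 (-378) 504 0 _ (by push_cast; ring))
    rw [show 3*k = k*3 by ring, show 2*k = k*2 by ring, pow_mul, pow_mul]
    nlinarith [mul_nonneg (mul_nonneg hyp h2) h4]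
  · refine nat_of _ ?_ _ (hdvd 63 126 (-504) 0 (by linear_combination hL)) (cast_eq 63 126 (-504) 0 _ (by push_cast; ring))
    rw [show 3*k = k*3 by ring, show 2*k = k*2 by ring, pow_mul, pow_mul]
    nlinarith [mul_nonneg (mul_nonneg hyp h2) (by linarith : (0:ℚ) ≤ 2^k + 4)]
end

section
/- For all natural numbers k ≥ 1, the quantities 2^k(7^k/1344 + 7·3^k/192 + 37/96), 2^k(7^k/448 − 3^k/64 + 1/32), 2^k(7^k/224 + 3·3^k/32 + 3/16), 2^k(7^k/192 + 3^k/192 − 5/96), 2^k(7^k/168 + 3^k/24 − 1/6), 2^k(7^k/192 + 17·3^k/192 + 19/96), 2^k(7^k/192 − 7·3^k/192 + 7/96), 2^k(7^k/96 + 5·3^k/96 − 11/48), 2^k(7^k/64 + 3^k/64 − 5/32), and 2^k(7^k/64 − 7·3^k/64 + 7/32) are all nonnegative integers. -/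
lemma H_dvd_all (a b c : ℤ) (h1 : (1344:ℤ) ∣ 2*(a*7+b*3+c))
    (h2 : (1344:ℤ) ∣ 4*(a*49+b*9+c)) (h3 : (1344:ℤ) ∣ 8*(a*343+b*27+c)) :
    ∀ k, 1 ≤ k → (1344:ℤ) ∣ 2^k*(a*7^k+b*3^k+c) := by
  have key : ∀ k : ℕ, ((1344:ℤ) ∣ 2^(k+1)*(a*7^(k+1)+b*3^(k+1)+c)) ∧
      ((1344:ℤ) ∣ 2^(k+2)*(a*7^(k+2)+b*3^(k+2)+c)) ∧
      ((1344:ℤ) ∣ 2^(k+3)*(a*7^(k+3)+b*3^(k+3)+c)) := by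
    intro k
    induction k with
    | zero =>
      refine ⟨?_, ?_, ?_⟩
      · obtain ⟨x, hx⟩ := h1; exact ⟨x, by linear_combination hx⟩
      · obtain ⟨x, hx⟩ := h2; exact ⟨x, by linear_combination hx⟩
      · obtain ⟨x, hx⟩ := h3; exact ⟨x, by linear_combination hx⟩
    | succ n ih =>
      obtain ⟨⟨x, hx⟩, ⟨y, hy⟩, ⟨z, hz⟩⟩ := ih
      refine ⟨⟨y, by linear_combination hy⟩, ⟨z, by linear_combination hz⟩,
        ⟨22*z - 124*y + 168*x, ?_⟩⟩
      linear_combination 22*hz - 124*hy + 168*hx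
  intro k hk
  obtain ⟨k', rfl⟩ : ∃ k', k = k' + 1 := ⟨k - 1, (Nat.succ_pred_eq_of_pos hk).symm⟩
  exact (key k').1

lemma H_exists_n (a b c : ℤ) (k : ℕ) (hk : 1 ≤ k)
    (h1 : (1344:ℤ) ∣ 2*(a*7+b*3+c))
    (h2 : (1344:ℤ) ∣ 4*(a*49+b*9+c)) (h3 : (1344:ℤ) ∣ 8*(a*343+b*27+c))
    (hpos : (0:ℤ) ≤ a*7^k+b*3^k+c) :
    ∃ n : ℕ, (2:ℚ)^k * ((a:ℚ)*7^k + (b:ℚ)*3^k + (c:ℚ)) = 1344 * n := by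
  obtain ⟨m, hm⟩ := H_dvd_all a b c h1 h2 h3 k hk
  have h2k : (0:ℤ) ≤ 2^k := by positivity
  have hm0 : 0 ≤ m := by nlinarith [mul_nonneg h2k hpos]
  refine ⟨m.toNat, ?_⟩
  have hq : ((2^k*(a*7^k+b*3^k+c) : ℤ) : ℚ) = ((1344*m : ℤ) : ℚ) := by exact_mod_cast hm
  have ht : ((m.toNat : ℕ) : ℚ) = (m : ℚ) := by exact_mod_cast Int.toNat_of_nonneg hm0
  push_cast at hq ⊢
  rw [ht]
  linear_combination hq

theorem H_multiplicities_integral (k : ℕ) (hk : 1 ≤ k) :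
    (∃ n : ℕ, (2 ^ k * (7 ^ k / 1344 + 7 * 3 ^ k / 192 + 37 / 96) : ℚ) = n) ∧
    (∃ n : ℕ, (2 ^ k * (7 ^ k / 448 - 3 ^ k / 64 + 1 / 32) : ℚ) = n) ∧
    (∃ n : ℕ, (2 ^ k * (7 ^ k / 224 + 3 * 3 ^ k / 32 + 3 / 16) : ℚ) = n) ∧
    (∃ n : ℕ, (2 ^ k * (7 ^ k / 192 + 3 ^ k / 192 - 5 / 96) : ℚ) = n) ∧
    (∃ n : ℕ, (2 ^ k * (7 ^ k / 168 + 3 ^ k / 24 - 1 / 6) : ℚ) = n) ∧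
    (∃ n : ℕ, (2 ^ k * (7 ^ k / 192 + 17 * 3 ^ k / 192 + 19 / 96) : ℚ) = n) ∧
    (∃ n : ℕ, (2 ^ k * (7 ^ k / 192 - 7 * 3 ^ k / 192 + 7 / 96) : ℚ) = n) ∧
    (∃ n : ℕ, (2 ^ k * (7 ^ k / 96 + 5 * 3 ^ k / 96 - 11 / 48) : ℚ) = n) ∧
    (∃ n : ℕ, (2 ^ k * (7 ^ k / 64 + 3 ^ k / 64 - 5 / 32) : ℚ) = n) ∧
    (∃ n : ℕ, (2 ^ k * (7 ^ k / 64 - 7 * 3 ^ k / 64 + 7 / 32) : ℚ) = n) := by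
  have hx : (7:ℤ) ≤ 7^k := by
    calc (7:ℤ) = 7^1 := by norm_num
    _ ≤ 7^k := pow_le_pow_right₀ (by norm_num) hk
  have hy : (3:ℤ) ≤ 3^k := by
    calc (3:ℤ) = 3^1 := by norm_num
    _ ≤ 3^k := pow_le_pow_right₀ (by norm_num) hk
  have hkey : (7:ℤ)*3^k ≤ 7^k + 14 := by
    clear hx hy
    induction k, hk using Nat.le_induction with
    | base => norm_num
    | succ n hn ih =>
      have h7 : (7:ℤ) ≤ 7^n := by
        calc (7:ℤ) = 7^1 := by norm_num
        _ ≤ 7^n := pow_le_pow_right₀ (by norm_num) hn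
      rw [pow_succ, pow_succ]
      linarith
  refine ⟨?_, ?_, ?_, ?_, ?_, ?_, ?_, ?_, ?_, ?_⟩
  · obtain ⟨n, hn⟩ := H_exists_n 1 49 518 k hk (by norm_num) (by norm_num) (by norm_num)
      (by linarith)
    exact ⟨n, by push_cast at hn; linear_combination hn/1344⟩
  · obtain ⟨n, hn⟩ := H_exists_n 3 (-21) 42 k hk (by norm_num) (by norm_num) (by norm_num)
      (by linarith)
    exact ⟨n, by push_cast at hn; linear_combination hn/1344⟩
  · obtain ⟨n, hn⟩ := H_exists_n 6 126 252 k hk (by norm_num) (by norm_num) (by norm_num)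
      (by linarith)
    exact ⟨n, by push_cast at hn; linear_combination hn/1344⟩
  · obtain ⟨n, hn⟩ := H_exists_n 7 7 (-70) k hk (by norm_num) (by norm_num) (by norm_num)
      (by linarith)
    exact ⟨n, by push_cast at hn; linear_combination hn/1344⟩
  · obtain ⟨n, hn⟩ := H_exists_n 8 56 (-224) k hk (by norm_num) (by norm_num) (by norm_num)
      (by linarith)
    exact ⟨n, by push_cast at hn; linear_combination hn/1344⟩
  · obtain ⟨n, hn⟩ := H_exists_n 7 119 266 k hk (by norm_num) (by norm_num) (by norm_num)
      (by linarith)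
    exact ⟨n, by push_cast at hn; linear_combination hn/1344⟩
  · obtain ⟨n, hn⟩ := H_exists_n 7 (-49) 98 k hk (by norm_num) (by norm_num) (by norm_num)
      (by linarith)
    exact ⟨n, by push_cast at hn; linear_combination hn/1344⟩
  · obtain ⟨n, hn⟩ := H_exists_n 14 70 (-308) k hk (by norm_num) (by norm_num) (by norm_num)
      (by linarith)
    exact ⟨n, by push_cast at hn; linear_combination hn/1344⟩
  · obtain ⟨n, hn⟩ := H_exists_n 21 21 (-210) k hk (by norm_num) (by norm_num) (by norm_num)
      (by linarith)
    exact ⟨n, by push_cast at hn; linear_combination hn/1344⟩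
  · obtain ⟨n, hn⟩ := H_exists_n 21 (-147) 294 k hk (by norm_num) (by norm_num) (by norm_num)
      (by linarith)
    exact ⟨n, by push_cast at hn; linear_combination hn/1344⟩
end
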